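/- arXiv:2411.12610 — 6 statements merged into one kernel-verified Lean document; each statement's English description precedes it below -/
import Mathlib

section
/- For any ξ ∈ ℝ and L > 0, the product e^{-iH₃L} e^{-iH₂L} e^{-iH₁L}, where H₁ = H₃ = -π/(2L) I + (π/(2√2 L))(σ_x+σ_z) and H₂ = (ξ/L) σ_x, equals the phase-shift gate e^{-i ξ σ_z} up to a global phase. -/
open Matrix Complex

lemma diag_two (a b : ℂ) : Matrix.diagonal ![a, b] = !![a, 0; 0, b] := by
  ext i j; fin_cases i <;> fin_cases j <;> simp [Matrix.diagonal]

lemma exp_conj_diag (P Q : Matrix (Fin 2) (Fin 2) ℂ) (d₁ d₂ : ℂ)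
    (h : P * Q = 1) (h' : Q * P = 1) :
    NormedSpace.exp (P * Matrix.diagonal ![d₁, d₂] * Q)
      = P * Matrix.diagonal ![Complex.exp d₁, Complex.exp d₂] * Q := by
  have hU : IsUnit P := ⟨⟨P, Q, h, h'⟩, rfl⟩
  have hQ : P⁻¹ = Q := Matrix.inv_eq_right_inv h
  have he : NormedSpace.exp (![d₁, d₂]) = ![Complex.exp d₁, Complex.exp d₂] := by
    funext i; rw [Pi.exp_def]; fin_cases i <;> simp [← Complex.exp_eq_exp_ℂ]
  rw [← hQ, Matrix.exp_conj _ _ hU, Matrix.exp_diagonal, he]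

set_option maxHeartbeats 1000000 in
/-- **Three sections implement an arbitrary phase-shift gate up to global phase.**
With `H₁ = H₃ = -π/(2L) I + (π/(2√2 L))(σ_x + σ_z)` and `H₂ = (ξ/L) σ_x`, there is a
real `θ` with `e^{-iH₃L} e^{-iH₂L} e^{-iH₁L} = e^{iθ} e^{-iξσ_z}`. -/
theorem phase_shift_from_three_sections (ξ L : ℝ) (hL : 0 < L)
    (σx σz H₁ H₂ H₃ : Matrix (Fin 2) (Fin 2) ℂ)
    (hσx : σx = !![0, 1; 1, 0]) (hσz : σz = !![1, 0; 0, -1])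
    (hH₁ : H₁ = ((-(Real.pi / (2 * L)) : ℝ) : ℂ) • (1 : Matrix (Fin 2) (Fin 2) ℂ) +
      ((Real.pi / (2 * Real.sqrt 2 * L) : ℝ) : ℂ) • (σx + σz))
    (hH₂ : H₂ = ((ξ / L : ℝ) : ℂ) • σx)
    (hH₃ : H₃ = H₁) :
    ∃ θ : ℝ,
      NormedSpace.exp ((-(Complex.I * (L : ℂ))) • H₃) *
        NormedSpace.exp ((-(Complex.I * (L : ℂ))) • H₂) *
        NormedSpace.exp ((-(Complex.I * (L : ℂ))) • H₁) =
      Complex.exp (Complex.I * (θ : ℂ)) •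
        NormedSpace.exp ((-(Complex.I * (ξ : ℂ))) • σz) := by
  refine ⟨0, ?_⟩
  set c : ℂ := ((Real.sqrt 2 : ℝ) : ℂ) with hcdef
  have hc2 : c * c = 2 := by
    rw [hcdef]; push_cast [← Complex.ofReal_mul]
    norm_cast
    exact Real.mul_self_sqrt (by norm_num)
  have hc : c ≠ 0 := by
    intro h; rw [h] at hc2; simp at hc2
  have hL0 : (L : ℂ) ≠ 0 := by exact_mod_cast hL.ne'
  set P : Matrix (Fin 2) (Fin 2) ℂ := !![1+c, 1-c; (1:ℂ), 1] with hPdef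
  set Q : Matrix (Fin 2) (Fin 2) ℂ :=
    !![1/(2*c), (c-1)/(2*c); -(1/(2*c)), (1+c)/(2*c)] with hQdef
  set S : Matrix (Fin 2) (Fin 2) ℂ := !![(1:ℂ), 1; 1, -1] with hSdef
  set T : Matrix (Fin 2) (Fin 2) ℂ := !![(1/2:ℂ), 1/2; 1/2, -(1/2)] with hTdef
  have hPQ : P * Q = 1 := by
    ext i j
    fin_cases i <;> fin_cases j <;>
      simp [hPdef, hQdef, Matrix.mul_apply, Fin.sum_univ_two, Matrix.one_apply] <;>
      field_simp <;> ring
  have hQP : Q * P = 1 := by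
    ext i j
    fin_cases i <;> fin_cases j <;>
      simp [hPdef, hQdef, Matrix.mul_apply, Fin.sum_univ_two, Matrix.one_apply] <;>
      field_simp <;> ring
  have hST : S * T = 1 := by
    ext i j
    fin_cases i <;> fin_cases j <;>
      simp [hSdef, hTdef, Matrix.mul_apply, Fin.sum_univ_two, Matrix.one_apply] <;> norm_num
  have hTS : T * S = 1 := by
    ext i j
    fin_cases i <;> fin_cases j <;>
      simp [hSdef, hTdef, Matrix.mul_apply, Fin.sum_univ_two, Matrix.one_apply] <;> norm_num
  -- decomposition of the three exponents
  have hA1 : (-(Complex.I * (L : ℂ))) • H₁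
      = P * Matrix.diagonal ![0, (Real.pi : ℂ) * Complex.I] * Q := by
    rw [hH₁, hσx, hσz, diag_two]
    ext i j
    fin_cases i <;> fin_cases j <;>
        simp [hPdef, hQdef, Matrix.mul_apply, Fin.sum_univ_two, Matrix.one_apply, ← hcdef] <;>
        field_simp <;> try ring
    linear_combination hc2
  have hA2 : (-(Complex.I * (L : ℂ))) • H₂
      = S * Matrix.diagonal ![-(Complex.I * (ξ:ℂ)), Complex.I * (ξ:ℂ)] * T := by
    rw [hH₂, hσx, diag_two]
    ext i j
    fin_cases i <;> fin_cases j <;>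
        simp [hSdef, hTdef, Matrix.mul_apply, Fin.sum_univ_two] <;>
        field_simp <;> ring
  have hA3 : (-(Complex.I * (ξ : ℂ))) • σz
      = Matrix.diagonal ![-(Complex.I * (ξ:ℂ)), Complex.I * (ξ:ℂ)] := by
    rw [hσz, diag_two]
    ext i j
    fin_cases i <;> fin_cases j <;> simp <;> ring
  -- compute the exponentials
  have hE1 : NormedSpace.exp ((-(Complex.I * (L : ℂ))) • H₁)
      = !![1/c, 1/c; 1/c, -(1/c)] := by
    rw [hA1, exp_conj_diag P Q _ _ hPQ hQP]
    rw [Complex.exp_zero, Complex.exp_pi_mul_I, diag_two]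
    ext i j
    fin_cases i <;> fin_cases j <;>
        simp [hPdef, hQdef, Matrix.mul_apply, Fin.sum_univ_two] <;>
        field_simp <;> try ring
    linear_combination 2*hc2
  have hE2 : NormedSpace.exp ((-(Complex.I * (L : ℂ))) • H₂)
      = S * Matrix.diagonal ![Complex.exp (-(Complex.I * (ξ:ℂ))),
          Complex.exp (Complex.I * (ξ:ℂ))] * T := by
    rw [hA2, exp_conj_diag S T _ _ hST hTS]
  have hE3 : NormedSpace.exp ((-(Complex.I * (ξ : ℂ))) • σz)
      = Matrix.diagonal ![Complex.exp (-(Complex.I * (ξ:ℂ))),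
          Complex.exp (Complex.I * (ξ:ℂ))] := by
    have := exp_conj_diag 1 1 (-(Complex.I * (ξ:ℂ))) (Complex.I * (ξ:ℂ))
      (one_mul 1) (one_mul 1)
    simpa [hA3] using this
  rw [hH₃, hE1, hE2, hE3]
  simp only [Complex.ofReal_zero, mul_zero, Complex.exp_zero, one_smul]
  set a := Complex.exp (-(Complex.I * (ξ:ℂ)))
  set b := Complex.exp (Complex.I * (ξ:ℂ))
  rw [diag_two]
  ext i j
  fin_cases i <;> fin_cases j <;>
      simp [hSdef, hTdef, Matrix.mul_apply, Fin.sum_univ_two] <;>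
      field_simp <;> try ring
  · linear_combination (-2*a)*hc2
  · linear_combination (-2*b)*hc2
end

section
/- Every U ∈ SU(2) can be written exactly as a product of at most 4 matrix exponentials e^{-iH₄L} e^{-iH₃L} e^{-iH₂L} e^{-iH₁L}, where each H_j = η_j I + α_j σ_z + κ_j σ_x is a 2×2 real symmetric matrix with strictly positive off-diagonal entry κ_j > 0 (after shifting by suitable integer multiples of 2π/L), and L > 0 is fixed. -/
/-!
A section propagator `exp (-i L (α σz + κ σx))` is a rotation about an axis in the x–z plane, so
it has the symmetric form `!![z, -i c; -i c, conj z]`; conversely every such matrix of determinant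
one is a section propagator with `κ > 0` unless it is diagonal and non-real (the rotation angle
can always be shifted by `2π` to make it positive). Multiplying `U ∈ SU(2)` on the right by a
suitable rotation about the x-axis makes it symmetric, `U = N R`. If `N` is not diagonal this
already uses two sections, and the remaining two are the identity; a diagonal `N` is split into
three non-diagonal symmetric factors.
-/

open Matrix Complex ComplexConjugate

theorem NormedSpace.exp_smul_of_sq_eq_one {𝔸 : Type*} [Ring 𝔸] [Algebra ℂ 𝔸]
    [TopologicalSpace 𝔸] [IsTopologicalRing 𝔸] [ContinuousSMul ℂ 𝔸] [T2Space 𝔸] {x : 𝔸}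
    (hx : x ^ 2 = 1) (z : ℂ) :
    NormedSpace.exp (z • x) = cosh z • (1 : 𝔸) + sinh z • x := by
  rw [NormedSpace.exp_eq_tsum ℂ]
  refine HasSum.tsum_eq (HasSum.even_add_odd ?_ ?_)
  · convert (hasSum_cosh z).smul_const (1 : 𝔸) using 2 with n
    rw [smul_pow, smul_smul, pow_mul x, hx, one_pow, div_eq_inv_mul]
  · convert (hasSum_sinh z).smul_const x using 2 with n
    rw [smul_pow, smul_smul, pow_succ x, pow_mul x, hx, one_pow, one_mul, div_eq_inv_mul]

theorem Real.exists_pos_cos_sin_eq {x y : ℝ} (h : x ^ 2 + y ^ 2 = 1) :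
    ∃ t : ℝ, 0 < t ∧ Real.cos t = x ∧ Real.sin t = y := by
  have hnorm : ‖(⟨x, y⟩ : ℂ)‖ = 1 := by
    rw [Complex.norm_def, Complex.normSq_mk, ← sq, ← sq, h, Real.sqrt_one]
  refine ⟨arg ⟨x, y⟩ + 2 * Real.pi, by linarith [neg_pi_lt_arg (⟨x, y⟩ : ℂ), Real.pi_pos],
    ?_, ?_⟩
  · simpa [hnorm] using norm_mul_cos_arg (⟨x, y⟩ : ℂ)
  · simpa [hnorm] using norm_mul_sin_arg (⟨x, y⟩ : ℂ)

def pauliX : Matrix (Fin 2) (Fin 2) ℂ := !![0, 1; 1, 0]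

def pauliZ : Matrix (Fin 2) (Fin 2) ℂ := !![1, 0; 0, -1]

noncomputable def sectionPropagator (L η α κ : ℝ) : Matrix (Fin 2) (Fin 2) ℂ :=
  NormedSpace.exp ((-(I * L)) • ((η : ℂ) • (1 : Matrix (Fin 2) (Fin 2) ℂ) + (α : ℂ) • pauliZ +
    (κ : ℂ) • pauliX))

/-- For `normSq z + c ^ 2 = 1` these are exactly the symmetric elements of SU(2), i.e. the
rotations `exp (-i t (nx σx + nz σz))` about axes in the x–z plane. -/
def symmetricSU2 (z : ℂ) (c : ℝ) : Matrix (Fin 2) (Fin 2) ℂ :=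
  !![z, -(I * c); -(I * c), conj z]

theorem det_symmetricSU2 (z : ℂ) (c : ℝ) :
    (symmetricSU2 z c).det = ((normSq z + c ^ 2 : ℝ) : ℂ) := by
  rw [symmetricSU2, det_fin_two_of, mul_conj]
  push_cast
  linear_combination (-(c : ℂ) ^ 2) * I_sq

theorem normSq_cos_add_sin_sq (e : ℝ) : normSq (Real.cos e : ℂ) + Real.sin e ^ 2 = 1 := by
  rw [normSq_ofReal, ← sq, Real.cos_sq_add_sin_sq]

theorem sq_smul_pauliZ_add_smul_pauliX (a b : ℂ) :
    (a • pauliZ + b • pauliX) ^ 2 = (a ^ 2 + b ^ 2) • (1 : Matrix (Fin 2) (Fin 2) ℂ) := by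
  ext i j
  fin_cases i <;> fin_cases j <;>
    simp [pauliX, pauliZ, sq, Matrix.mul_apply, Fin.sum_univ_two] <;> ring

theorem sectionPropagator_eq_symmetricSU2 (L ω nx nz : ℝ) (hn : nx ^ 2 + nz ^ 2 = 1) :
    sectionPropagator L 0 (ω * nz) (ω * nx) =
      symmetricSU2 (Real.cos (L * ω) - (Real.sin (L * ω) * nz : ℝ) * I)
        (Real.sin (L * ω) * nx) := by
  have hA : ((nz : ℂ) • pauliZ + (nx : ℂ) • pauliX) ^ 2 = 1 := by
    rw [sq_smul_pauliZ_add_smul_pauliX, ← ofReal_pow, ← ofReal_pow, ← ofReal_add, add_comm, hn,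
      ofReal_one, one_smul]
  have hH : (-(I * L)) • (((0 : ℝ) : ℂ) • (1 : Matrix (Fin 2) (Fin 2) ℂ) +
      ((ω * nz : ℝ) : ℂ) • pauliZ + ((ω * nx : ℝ) : ℂ) • pauliX) =
      (-(L * ω : ℝ) * I) • ((nz : ℂ) • pauliZ + (nx : ℂ) • pauliX) := by
    simp only [ofReal_zero, zero_smul, zero_add, smul_add, smul_smul, ofReal_mul]
    congr 2 <;> ring
  rw [sectionPropagator, hH, NormedSpace.exp_smul_of_sq_eq_one hA, cosh_mul_I, sinh_mul_I,
    cos_neg, sin_neg, ← ofReal_cos, ← ofReal_sin]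
  ext i j
  fin_cases i <;> fin_cases j <;>
    simp [symmetricSU2, pauliX, pauliZ, -ofReal_cos, -ofReal_sin] <;> ring

/-- The offset `η` only contributes a global phase, so it is fixed to `0`. -/
def IsSectionPropagator (L : ℝ) (M : Matrix (Fin 2) (Fin 2) ℂ) : Prop :=
  ∃ α κ : ℝ, 0 < κ ∧ sectionPropagator L 0 α κ = M

theorem isSectionPropagator_symmetricSU2 {L : ℝ} (hL : 0 < L) {z : ℂ} {c : ℝ}
    (hzc : normSq z + c ^ 2 = 1) (hc : c = 0 → z.im = 0) :
    IsSectionPropagator L (symmetricSU2 z c) := by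
  -- `φ` is the direction of the rotation axis and `s` the sine of the rotation angle; for `c = 0`
  -- the junk value `-z.im / 0 = 0` gives the axis `σx`.
  set φ := Real.arctan (-z.im / c)
  have hcos : 0 < Real.cos φ := Real.cos_arctan_pos _
  set s := c / Real.cos φ
  have hs_cos : s * Real.cos φ = c := div_mul_cancel₀ _ hcos.ne'
  have hs_sin : s * Real.sin φ = -z.im := by
    rcases eq_or_ne c 0 with rfl | hc0
    · simp [s, hc rfl]
    · rw [div_mul_eq_mul_div, mul_div_assoc, ← Real.tan_eq_sin_div_cos, Real.tan_arctan,
        mul_div_cancel₀ _ hc0]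
  have hs : z.re ^ 2 + s ^ 2 = 1 := by
    rw [normSq_apply] at hzc
    linear_combination hzc - s ^ 2 * Real.cos_sq_add_sin_sq φ + (s * Real.cos φ + c) * hs_cos
      + (s * Real.sin φ - z.im) * hs_sin
  obtain ⟨t, ht, ht_cos, ht_sin⟩ := Real.exists_pos_cos_sin_eq hs
  refine ⟨t / L * Real.sin φ, t / L * Real.cos φ, mul_pos (div_pos ht hL) hcos, ?_⟩
  rw [sectionPropagator_eq_symmetricSU2 L _ _ _ (Real.cos_sq_add_sin_sq φ),
    mul_div_cancel₀ t hL.ne', ht_cos, ht_sin, hs_cos, hs_sin, ofReal_neg, neg_mul, sub_neg_eq_add,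
    re_add_im]

theorem Matrix.exists_eq_of_mem_specialUnitaryGroup_fin_two {U : Matrix (Fin 2) (Fin 2) ℂ}
    (hU : U ∈ specialUnitaryGroup (Fin 2) ℂ) :
    ∃ a b : ℂ, normSq a + normSq b = 1 ∧ U = !![a, b; -conj b, conj a] := by
  obtain ⟨hunit, hdet⟩ := mem_specialUnitaryGroup_iff.mp hU
  have hstar : star U = U.adjugate := calc
    star U = star U * (U * U.adjugate) := by rw [mul_adjugate, hdet, one_smul, mul_one]
    _ = U.adjugate := by rw [← Matrix.mul_assoc, mem_unitaryGroup_iff'.mp hunit, one_mul]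
  rw [adjugate_fin_two] at hstar
  have h11 : U 1 1 = conj (U 0 0) := by simpa using (congrFun₂ hstar 0 0).symm
  have h10 : U 1 0 = -conj (U 0 1) := by
    have h : conj (U 0 1) = -U 1 0 := by simpa using congrFun₂ hstar 1 0
    rw [h, neg_neg]
  have hU_eq : U = !![U 0 0, U 0 1; -conj (U 0 1), conj (U 0 0)] := by
    rw [← h11, ← h10]; exact eta_fin_two U
  refine ⟨U 0 0, U 0 1, ?_, hU_eq⟩
  rw [hU_eq, det_fin_two_of] at hdet
  exact_mod_cast (by simpa [mul_conj] using hdet : (normSq (U 0 0) + normSq (U 0 1) : ℂ) = 1)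

theorem exists_eq_symmetricSU2_mul_symmetricSU2 {a b : ℂ} (hab : normSq a + normSq b = 1) :
    ∃ (z : ℂ) (c e : ℝ), normSq z + c ^ 2 = 1 ∧
      !![a, b; -conj b, conj a] = symmetricSU2 z c * symmetricSU2 (Real.cos e) (Real.sin e) := by
  -- `he` is the condition for the matrix times the inverse x-rotation through `e` to be symmetric.
  set e := arg ⟨a.im, b.re⟩
  have he : a.im * Real.sin e = b.re * Real.cos e := by
    have hcos : ‖(⟨a.im, b.re⟩ : ℂ)‖ * Real.cos e = a.im := norm_mul_cos_arg _
    have hsin : ‖(⟨a.im, b.re⟩ : ℂ)‖ * Real.sin e = b.re := norm_mul_sin_arg _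
    linear_combination Real.cos e * hsin - Real.sin e * hcos
  set z := a * Real.cos e + I * b * Real.sin e
  set c := -(a.re * Real.sin e + b.im * Real.cos e)
  have hzce : !![a, b; -conj b, conj a] =
      symmetricSU2 z c * symmetricSU2 (Real.cos e) (Real.sin e) := by
    have hcs := Real.cos_sq_add_sin_sq e
    ext i j
    fin_cases i <;> fin_cases j <;> apply Complex.ext <;>
      simp [z, c, symmetricSU2, Matrix.mul_apply, -ofReal_cos, -ofReal_sin] <;>
      grind
  refine ⟨z, c, e, ?_, hzce⟩
  have hdet := congrArg det hzce
  rw [det_mul, det_symmetricSU2, det_symmetricSU2, normSq_cos_add_sin_sq, ofReal_one, mul_one,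
    det_fin_two_of, mul_neg, sub_neg_eq_add, mul_conj, mul_conj, ← ofReal_add, hab] at hdet
  exact_mod_cast hdet.symm

theorem symmetricSU2_one_zero : symmetricSU2 1 0 = 1 := by
  ext i j
  fin_cases i <;> fin_cases j <;> simp [symmetricSU2]

/-- A non-real diagonal matrix is not a section propagator; the triple `3² + 4² = 5²` splits it
into three that are. -/
theorem symmetricSU2_zero_eq_mul {w : ℂ} (hw : normSq w = 1) :
    symmetricSU2 w 0 = symmetricSU2 0 1 * symmetricSU2 (-(3 / 5) * conj w) (4 / 5) *
      symmetricSU2 (-(4 / 5) * w) (3 / 5) := by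
  have hw' : w * conj w = 1 := by rw [mul_conj, hw, ofReal_one]
  ext i j
  fin_cases i <;> fin_cases j <;>
    simp [symmetricSU2, Matrix.mul_apply, map_ofNat] <;> grind [I_sq]

theorem exists_sectionPropagator_factors {L : ℝ} (hL : 0 < L) {U : Matrix (Fin 2) (Fin 2) ℂ}
    (hU : U ∈ specialUnitaryGroup (Fin 2) ℂ) :
    ∃ M : Fin 4 → Matrix (Fin 2) (Fin 2) ℂ,
      (∀ j, IsSectionPropagator L (M j)) ∧ U = M 3 * M 2 * M 1 * M 0 := by
  obtain ⟨a, b, hab, rfl⟩ := exists_eq_of_mem_specialUnitaryGroup_fin_two hU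
  obtain ⟨z, c, e, hzc, hzce⟩ := exists_eq_symmetricSU2_mul_symmetricSU2 hab
  have hR : IsSectionPropagator L (symmetricSU2 (Real.cos e) (Real.sin e)) :=
    isSectionPropagator_symmetricSU2 hL (normSq_cos_add_sin_sq e) fun _ => ofReal_im _
  rcases eq_or_ne c 0 with rfl | hc
  · have hz : normSq z = 1 := by simpa using hzc
    refine ⟨![symmetricSU2 (Real.cos e) (Real.sin e), symmetricSU2 (-(4 / 5) * z) (3 / 5),
      symmetricSU2 (-(3 / 5) * conj z) (4 / 5), symmetricSU2 0 1], ?_, ?_⟩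
    · intro j
      fin_cases j
      · exact hR
      all_goals
        exact isSectionPropagator_symmetricSU2 hL (by norm_num [normSq_mul, hz]) (by norm_num)
    · rw [hzce, symmetricSU2_zero_eq_mul hz]
      simp [Matrix.mul_assoc]
  · refine ⟨![symmetricSU2 (Real.cos e) (Real.sin e), symmetricSU2 z c, 1, 1], ?_, ?_⟩
    · intro j
      fin_cases j
      · exact hR
      · exact isSectionPropagator_symmetricSU2 hL hzc fun h => absurd h hc
      all_goals simpa [symmetricSU2_one_zero] using
        isSectionPropagator_symmetricSU2 (z := 1) (c := 0) hL (by simp) (fun _ => rfl)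
    · simp [hzce]

/-- **Four sections suffice for an arbitrary SU(2) gate.**
For any fixed `L > 0`, every `U ∈ SU(2)` can be written (up to a global phase) as
`e^{-iH₄L} e^{-iH₃L} e^{-iH₂L} e^{-iH₁L}` where each
`H_j = η_j I + α_j σ_z + κ_j σ_x` is real symmetric with strictly positive
off-diagonal entry `κ_j > 0`. -/
theorem su2_four_section_decomposition (L : ℝ) (hL : 0 < L)
    (σx σz : Matrix (Fin 2) (Fin 2) ℂ)
    (hσx : σx = !![0, 1; 1, 0]) (hσz : σz = !![1, 0; 0, -1])
    (U : Matrix.specialUnitaryGroup (Fin 2) ℂ) :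
    ∃ η α κ : Fin 4 → ℝ, (∀ j, 0 < κ j) ∧ ∃ θ : ℝ,
      (U : Matrix (Fin 2) (Fin 2) ℂ) =
        Complex.exp (Complex.I * (θ : ℂ)) •
          (NormedSpace.exp ((-(Complex.I * (L : ℂ))) •
              ((η 3 : ℂ) • (1 : Matrix (Fin 2) (Fin 2) ℂ) + (α 3 : ℂ) • σz + (κ 3 : ℂ) • σx)) *
           NormedSpace.exp ((-(Complex.I * (L : ℂ))) •
              ((η 2 : ℂ) • (1 : Matrix (Fin 2) (Fin 2) ℂ) + (α 2 : ℂ) • σz + (κ 2 : ℂ) • σx)) *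
           NormedSpace.exp ((-(Complex.I * (L : ℂ))) •
              ((η 1 : ℂ) • (1 : Matrix (Fin 2) (Fin 2) ℂ) + (α 1 : ℂ) • σz + (κ 1 : ℂ) • σx)) *
           NormedSpace.exp ((-(Complex.I * (L : ℂ))) •
              ((η 0 : ℂ) • (1 : Matrix (Fin 2) (Fin 2) ℂ) + (α 0 : ℂ) • σz + (κ 0 : ℂ) • σx))) := by
  subst hσx hσz
  obtain ⟨M, hM, hU⟩ := exists_sectionPropagator_factors hL U.2
  choose α κ hκ hprop using hM
  refine ⟨0, α, κ, hκ, 0, ?_⟩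
  rw [ofReal_zero, mul_zero, Complex.exp_zero, one_smul, hU, ← hprop, ← hprop, ← hprop, ← hprop]
  rfl
end

section
/- Any unitary matrix U ∈ SU(d) can be decomposed as a finite product of unitaries each of which acts nontrivially only on a two-dimensional subspace spanned by two adjacent computational basis vectors |m⟩, |m+1⟩, using at most d(d-1)(2d-1)/6 factors. -/
/-!
Givens elimination on adjacent modes. Let `M` be unitary and equal to the identity outside its
leading `(n+1) × (n+1)` block. Rotations on the mode pairs `(0,1), …, (n-1,n)`, each chosen to
leave a nonnegative real number on its lower mode, bring column `n` of `M` to `r • eₙ` with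
`r ≥ 0`; unitarity forces `r = 1` and row `n` to be `eₙ`, so the block shrinks by one. A `2 × 2`
block is itself an adjacent two-mode unitary, so `d(d-1)/2 ≤ d(d-1)(2d-1)/6` factors suffice.
-/

open Matrix

/-- `V` is a unitary acting nontrivially only on the two adjacent modes `m, m+1`. -/
def IsAdjacentTwoModeUnitary {d : ℕ} (V : Matrix (Fin d) (Fin d) ℂ) : Prop :=
  V ∈ Matrix.unitaryGroup (Fin d) ℂ ∧
  ∃ m : ℕ, m + 2 ≤ d ∧
    ∀ i j : Fin d,
      (((i : ℕ) ≠ m ∧ (i : ℕ) ≠ m + 1) ∨ ((j : ℕ) ≠ m ∧ (j : ℕ) ≠ m + 1)) →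
        V i j = (1 : Matrix (Fin d) (Fin d) ℂ) i j

namespace Function.Injective

variable {κ ι : Type*} {f : κ → ι}

open Classical in
noncomputable def sumComplRangeEquiv (hf : f.Injective) : κ ⊕ ↥(Set.range f)ᶜ ≃ ι :=
  ((Equiv.ofInjective f hf).sumCongr (Equiv.refl _)).trans (Equiv.Set.sumCompl (Set.range f))

@[simp]
lemma sumComplRangeEquiv_inl (hf : f.Injective) (a : κ) :
    hf.sumComplRangeEquiv (Sum.inl a) = f a := by
  simp [sumComplRangeEquiv]

@[simp]
lemma sumComplRangeEquiv_inr (hf : f.Injective) (i : ↥(Set.range f)ᶜ) :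
    hf.sumComplRangeEquiv (Sum.inr i) = i := by
  simp [sumComplRangeEquiv]

end Function.Injective

namespace Matrix

section ExtendAlong

variable {κ ι R : Type*} {f : κ → ι} [DecidableEq ι]

/-- `V` acting on the coordinates `f k`, the identity on all other coordinates. -/
noncomputable def extendAlong [Zero R] [One R] (hf : f.Injective) (V : Matrix κ κ R) :
    Matrix ι ι R :=
  (fromBlocks V 0 0 1).submatrix hf.sumComplRangeEquiv.symm hf.sumComplRangeEquiv.symm

lemma extendAlong_apply_sumComplRangeEquiv [Zero R] [One R] (hf : f.Injective)
    (V : Matrix κ κ R) (x y : κ ⊕ ↥(Set.range f)ᶜ) :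
    extendAlong hf V (hf.sumComplRangeEquiv x) (hf.sumComplRangeEquiv y) =
      fromBlocks V 0 0 1 x y := by
  simp [extendAlong]

lemma extendAlong_apply_of_notMem [Zero R] [One R] (hf : f.Injective) (V : Matrix κ κ R)
    {i j : ι} (h : i ∉ Set.range f ∨ j ∉ Set.range f) :
    extendAlong hf V i j = (1 : Matrix ι ι R) i j := by
  obtain ⟨x, rfl⟩ := hf.sumComplRangeEquiv.surjective i
  obtain ⟨y, rfl⟩ := hf.sumComplRangeEquiv.surjective j
  rw [extendAlong_apply_sumComplRangeEquiv]
  rcases x with a | x <;> rcases y with b | y <;> simp_all [one_apply, ← Subtype.ext_iff]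
  exact fun hxb => (h b hxb.symm).elim

lemma extendAlong_mulVec_apply [Fintype κ] [Fintype ι] [Semiring R] (hf : f.Injective)
    (V : Matrix κ κ R) (v : ι → R) (a : κ) :
    (extendAlong hf V *ᵥ v) (f a) = (V *ᵥ (v ∘ f)) a := by
  rw [extendAlong, submatrix_mulVec_equiv, Function.comp_apply, Equiv.symm_symm,
    ← hf.sumComplRangeEquiv_inl, Equiv.symm_apply_apply, fromBlocks_mulVec]
  simp [Function.comp_def]

lemma extendAlong_mulVec_apply_of_notMem [Fintype ι] [Semiring R] (hf : f.Injective)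
    (V : Matrix κ κ R) (v : ι → R) {i : ι} (hi : i ∉ Set.range f) :
    (extendAlong hf V *ᵥ v) i = v i := by
  simp [mulVec, dotProduct, extendAlong_apply_of_notMem hf V (Or.inl hi), one_apply]

variable [Fintype κ] [Fintype ι]

lemma extendAlong_mul [Semiring R] (hf : f.Injective) (V W : Matrix κ κ R) :
    extendAlong hf (V * W) = extendAlong hf V * extendAlong hf W := by
  simp [extendAlong, submatrix_mul_equiv, fromBlocks_multiply]

lemma extendAlong_mem_unitaryGroup [DecidableEq κ] [CommRing R] [StarRing R] (hf : f.Injective)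
    {V : Matrix κ κ R} (hV : V ∈ unitaryGroup κ R) : extendAlong hf V ∈ unitaryGroup ι R := by
  have hstar : star (extendAlong hf V) = extendAlong hf (star V) := by
    simp [extendAlong, star_eq_conjTranspose, conjTranspose_submatrix, fromBlocks_conjTranspose]
  rw [mem_unitaryGroup_iff, hstar, ← extendAlong_mul, mem_unitaryGroup_iff.mp hV]
  simp [extendAlong, fromBlocks_one]

end ExtendAlong

lemma eq_one_and_row_eq_of_col_eq {ι : Type*} [Fintype ι] [DecidableEq ι]
    {M : Matrix ι ι ℂ} (hM : M ∈ unitaryGroup ι ℂ) {j : ι} {r : ℝ} (hr : 0 ≤ r)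
    (hcol : ∀ i, M i j = if i = j then (r : ℂ) else 0) :
    (r : ℂ) = 1 ∧ ∀ i, M j i = (1 : Matrix ι ι ℂ) j i := by
  have key : ∀ i, star (M j i) * r = (1 : Matrix ι ι ℂ) i j := fun i => by
    simpa [mul_apply, hcol] using congr_fun (congr_fun (mem_unitaryGroup_iff'.mp hM) i) j
  have hr1 : (r : ℂ) = 1 := by
    have hrr : r * r = 1 := by exact_mod_cast (by simpa [hcol] using key j : (r : ℂ) * r = 1)
    exact_mod_cast (show r = 1 by nlinarith)
  refine ⟨hr1, fun i => ?_⟩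
  rw [← star_star (M j i), ← mul_one (star (M j i)), ← hr1, key i, ← conjTranspose_apply,
    conjTranspose_one]

section IdentityBeyond

variable {d : ℕ} {R : Type*}

variable (R) in
def identityBeyond [Semiring R] (n : ℕ) : Submonoid (Matrix (Fin d) (Fin d) R) where
  carrier :=
    {M | ∀ i j : Fin d, n ≤ (i : ℕ) ∨ n ≤ (j : ℕ) → M i j = (1 : Matrix (Fin d) (Fin d) R) i j}
  one_mem' := fun _ _ _ => rfl
  mul_mem' := by
    intro M N hM hN i j hij
    rcases hij with hi | hj
    · simp [mul_apply, hM i _ (Or.inl hi), one_apply, hN i j (Or.inl hi)]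
    · simp [mul_apply, hN _ j (Or.inr hj), one_apply, hM i j (Or.inr hj)]

lemma identityBeyond_mono [Semiring R] {n n' : ℕ} (h : n ≤ n') :
    identityBeyond (d := d) R n ≤ identityBeyond R n' :=
  fun _ hM i j hij => hM i j (by omega)

lemma star_mem_identityBeyond [Semiring R] [StarRing R] {n : ℕ} {M : Matrix (Fin d) (Fin d) R}
    (hM : M ∈ identityBeyond R n) : star M ∈ identityBeyond R n := by
  intro i j hij
  rw [star_apply, hM j i hij.symm, ← conjTranspose_apply, conjTranspose_one]

lemma mem_identityBeyond_of_col_eq {j : Fin d} {M : Matrix (Fin d) (Fin d) ℂ}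
    (hMu : M ∈ unitaryGroup (Fin d) ℂ) (hM : M ∈ identityBeyond ℂ (j + 1)) {r : ℝ} (hr : 0 ≤ r)
    (hlt : ∀ i < j, M i j = 0) (heq : M j j = r) : M ∈ identityBeyond ℂ j := by
  have hcol : ∀ i, M i j = if i = j then (r : ℂ) else 0 := by
    intro i
    rcases lt_trichotomy i j with h | rfl | h
    · rw [hlt i h, if_neg h.ne]
    · rw [if_pos rfl, heq]
    · simp [hM i j (Or.inl h), h.ne']
  obtain ⟨hr1, hrow⟩ := eq_one_and_row_eq_of_col_eq hMu hr hcol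
  intro i k hik
  by_cases hbig : (j : ℕ) + 1 ≤ i ∨ (j : ℕ) + 1 ≤ k
  · exact hM i k hbig
  rcases hik with hi | hk
  · rw [show i = j by omega, hrow]
  · rw [show k = j by omega, hcol, hr1, one_apply]

end IdentityBeyond

lemma exists_mem_unitaryGroup_mulVec_eq (x y : ℂ) :
    ∃ V ∈ unitaryGroup (Fin 2) ℂ, ∃ r : ℝ, 0 ≤ r ∧ V *ᵥ ![0, (r : ℂ)] = ![x, y] := by
  by_cases h0 : x = 0 ∧ y = 0
  · exact ⟨1, one_mem _, 0, le_rfl, by simp [h0.1, h0.2]⟩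
  have hpos : 0 < Complex.normSq x + Complex.normSq y := by
    rcases not_and_or.mp h0 with h | h
    · linarith [Complex.normSq_pos.mpr h, Complex.normSq_nonneg y]
    · linarith [Complex.normSq_pos.mpr h, Complex.normSq_nonneg x]
  set s := √(Complex.normSq x + Complex.normSq y)
  have hs : (s : ℂ) ≠ 0 := by exact_mod_cast (Real.sqrt_pos.mpr hpos).ne'
  have hs2 : (s : ℂ) ^ 2 = x * star x + y * star y := by
    rw [← Complex.ofReal_pow, Real.sq_sqrt hpos.le]
    simp [Complex.mul_conj]
  -- second column `(x, y) / s`, first column the orthogonal unit vector `(ȳ, -x̄) / s`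
  refine ⟨(s : ℂ)⁻¹ • !![star y, x; -star x, y], ?_, s, Real.sqrt_nonneg _, ?_⟩
  · rw [mem_unitaryGroup_iff]
    ext i j
    fin_cases i <;> fin_cases j <;> simp [mul_apply, Fin.sum_univ_two] <;> field_simp <;>
      simp only [hs2, Complex.star_def] <;> ring
  · ext i
    fin_cases i <;> simp [mulVec, dotProduct, Fin.sum_univ_two] <;> field_simp

end Matrix

variable {d m : ℕ}

def adjacentModes (hm : m + 1 < d) : Fin 2 → Fin d := fun k => ⟨m + k, by omega⟩

lemma adjacentModes_injective (hm : m + 1 < d) : (adjacentModes hm).Injective := by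
  intro k l h
  simpa [adjacentModes, Fin.ext_iff] using h

lemma mem_range_adjacentModes (hm : m + 1 < d) {i : Fin d} :
    i ∈ Set.range (adjacentModes hm) ↔ (i : ℕ) = m ∨ (i : ℕ) = m + 1 := by
  simp [adjacentModes, Fin.exists_fin_two, Fin.ext_iff, eq_comm]

lemma extendAlong_adjacentModes_mem_identityBeyond {R : Type*} [Semiring R] (hm : m + 1 < d)
    (V : Matrix (Fin 2) (Fin 2) R) :
    extendAlong (adjacentModes_injective hm) V ∈ identityBeyond R (m + 2) := by
  intro i j hij
  refine extendAlong_apply_of_notMem _ V ?_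
  simp only [mem_range_adjacentModes]
  omega

lemma isAdjacentTwoModeUnitary_extendAlong (hm : m + 1 < d) {V : Matrix (Fin 2) (Fin 2) ℂ}
    (hV : V ∈ unitaryGroup (Fin 2) ℂ) :
    IsAdjacentTwoModeUnitary (extendAlong (adjacentModes_injective hm) V) := by
  refine ⟨extendAlong_mem_unitaryGroup _ hV, m, hm, fun i j hij => ?_⟩
  refine extendAlong_apply_of_notMem _ V ?_
  simpa only [mem_range_adjacentModes, not_or] using hij

lemma exists_adjacentTwoMode_mulVec_eq (w : Fin d → ℂ) (hm : m + 1 < d) :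
    ∃ G, IsAdjacentTwoModeUnitary G ∧ G ∈ identityBeyond ℂ (m + 2) ∧
      ∃ w' : Fin d → ℂ, w = G *ᵥ w' ∧ w' ⟨m, by omega⟩ = 0 ∧
        (∃ r : ℝ, 0 ≤ r ∧ w' ⟨m + 1, hm⟩ = r) ∧
        ∀ i : Fin d, (i : ℕ) ≠ m → (i : ℕ) ≠ m + 1 → w' i = w i := by
  obtain ⟨V, hV, r, hr, hVr⟩ :=
    exists_mem_unitaryGroup_mulVec_eq (w ⟨m, by omega⟩) (w ⟨m + 1, hm⟩)
  let w' : Fin d → ℂ := fun i => if (i : ℕ) = m then 0 else if (i : ℕ) = m + 1 then r else w i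
  refine ⟨_, isAdjacentTwoModeUnitary_extendAlong hm hV,
    extendAlong_adjacentModes_mem_identityBeyond hm V, w', ?_, by simp [w'],
    ⟨r, hr, by simp [w']⟩, fun i h₀ h₁ => by simp [w', h₀, h₁]⟩
  funext i
  by_cases hi : i ∈ Set.range (adjacentModes hm)
  · obtain ⟨k, rfl⟩ := hi
    have hw' : w' ∘ adjacentModes hm = ![0, (r : ℂ)] := by
      funext l
      fin_cases l <;> simp [w', adjacentModes]
    rw [extendAlong_mulVec_apply, hw', hVr]
    fin_cases k <;> rfl
  · rw [extendAlong_mulVec_apply_of_notMem _ _ _ hi]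
    rw [mem_range_adjacentModes] at hi
    simp [w', not_or.mp hi]

lemma exists_list_prod_mulVec_eq (v : Fin d → ℂ) {n : ℕ} (hn₀ : 1 ≤ n) (hn : n < d) :
    ∃ L : List (Matrix (Fin d) (Fin d) ℂ), L.length = n ∧
      (∀ W ∈ L, IsAdjacentTwoModeUnitary W ∧ W ∈ identityBeyond ℂ (n + 1)) ∧
      ∃ w : Fin d → ℂ, v = L.prod *ᵥ w ∧ (∀ i : Fin d, (i : ℕ) < n → w i = 0) ∧
        ∃ r : ℝ, 0 ≤ r ∧ w ⟨n, hn⟩ = r := by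
  induction n, hn₀ using Nat.le_induction with
  | base =>
    obtain ⟨G, hG, hGb, w, hvw, hw₀, hw₁, -⟩ := exists_adjacentTwoMode_mulVec_eq v hn
    refine ⟨[G], rfl, by simpa using ⟨hG, hGb⟩, w, by simpa using hvw, fun i hi => ?_, hw₁⟩
    rwa [show i = ⟨0, by omega⟩ from Fin.ext (show (i : ℕ) = 0 by omega)]
  | succ n hn₀ ih =>
    obtain ⟨L, hlen, hL, w, hvw, hw, -⟩ := ih (by omega)
    obtain ⟨G, hG, hGb, w', hww', hw'₀, hw'₁, hw'⟩ := exists_adjacentTwoMode_mulVec_eq w hn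
    refine ⟨L ++ [G], by simp [hlen], ?_, w', ?_, fun i hi => ?_, hw'₁⟩
    · intro W hW
      rcases List.mem_append.mp hW with hW | hW
      · exact ⟨(hL W hW).1, identityBeyond_mono (by omega) (hL W hW).2⟩
      · rw [List.mem_singleton.mp hW]
        exact ⟨hG, hGb⟩
    · rw [hvw, hww', mulVec_mulVec, List.prod_append, List.prod_singleton]
    · rcases Nat.lt_succ_iff_lt_or_eq.mp hi with hi | hi
      · rw [hw' i hi.ne (by omega), hw i hi]
      · rwa [show i = ⟨n, by omega⟩ from Fin.ext hi]

lemma exists_adjacentTwoMode_list_prod_eq {n : ℕ} (hn : 2 ≤ n) (hnd : n ≤ d)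
    {M : Matrix (Fin d) (Fin d) ℂ} (hMu : M ∈ unitaryGroup (Fin d) ℂ)
    (hM : M ∈ identityBeyond ℂ n) :
    ∃ L : List (Matrix (Fin d) (Fin d) ℂ), (∀ W ∈ L, IsAdjacentTwoModeUnitary W) ∧
      2 * L.length = n * (n - 1) ∧ M = L.prod := by
  induction n, hn using Nat.le_induction generalizing M with
  | base =>
    refine ⟨[M], ?_, rfl, by simp⟩
    simpa using ⟨hMu, 0, hnd, fun i j hij => hM i j (by omega)⟩
  | succ n hn ih =>
    obtain ⟨L₁, hlen₁, hL₁, w, hvw, hw, r, hr, hwn⟩ :=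
      exists_list_prod_mulVec_eq (fun i => M i ⟨n, hnd⟩) (by omega) hnd
    set P := L₁.prod
    have hPu : P ∈ unitaryGroup (Fin d) ℂ := list_prod_mem fun W hW => (hL₁ W hW).1.1
    have hP : P ∈ identityBeyond ℂ (n + 1) := list_prod_mem fun W hW => (hL₁ W hW).2
    have hcol : ∀ i, (star P * M) i ⟨n, hnd⟩ = w i := fun i => by
      change (star P *ᵥ fun k => M k ⟨n, hnd⟩) i = w i
      rw [hvw, mulVec_mulVec, Unitary.star_mul_self_of_mem hPu, one_mulVec]
    have hM'u : star P * M ∈ unitaryGroup (Fin d) ℂ := mul_mem (Unitary.star_mem hPu) hMu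
    obtain ⟨L₂, hL₂, hlen₂, hM'⟩ := ih (by omega) hM'u
      (mem_identityBeyond_of_col_eq (j := ⟨n, hnd⟩) hM'u
        (mul_mem (star_mem_identityBeyond hP) hM) hr (fun i hi => (hcol i).trans (hw i hi))
        ((hcol _).trans hwn))
    refine ⟨L₁ ++ L₂, ?_, ?_, ?_⟩
    · simpa [or_imp, forall_and] using ⟨fun W hW => (hL₁ W hW).1, hL₂⟩
    · rw [List.length_append, hlen₁, mul_add, hlen₂]
      obtain ⟨n, rfl⟩ : ∃ k, n = k + 1 := ⟨n - 1, by omega⟩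
      simp only [Nat.add_sub_cancel]
      ring
    · rw [List.prod_append, ← hM', ← mul_assoc, Unitary.mul_star_self_of_mem hPu, one_mul]

/-- **Decomposition into adjacent two-mode unitaries.**
Every `U ∈ SU(d)` is a product of at most `d(d-1)(2d-1)/6` unitaries, each acting
nontrivially only on two adjacent computational basis modes. -/
theorem su_d_adjacent_two_mode_decomposition (d : ℕ) (hd : 2 ≤ d)
    (U : Matrix.specialUnitaryGroup (Fin d) ℂ) :
    ∃ K : ℕ, K ≤ d * (d - 1) * (2 * d - 1) / 6 ∧
      ∃ V : Fin K → Matrix (Fin d) (Fin d) ℂ,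
        (∀ k, IsAdjacentTwoModeUnitary (V k)) ∧
        (U : Matrix (Fin d) (Fin d) ℂ) = ((List.ofFn V).reverse).prod := by
  obtain ⟨L, hL, hlen, hU⟩ := exists_adjacentTwoMode_list_prod_eq hd le_rfl
    (mem_specialUnitaryGroup_iff.mp U.2).1 (fun i j _ => by omega)
  refine ⟨L.reverse.length, ?_, L.reverse.get,
    fun k => hL _ (List.mem_reverse.mp (List.get_mem _ k)), ?_⟩
  · have h3 : 3 ≤ 2 * d - 1 := by omega
    rw [Nat.le_div_iff_mul_le (by norm_num), List.length_reverse]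
    nlinarith [Nat.mul_le_mul_left (d * (d - 1)) h3]
  · rw [List.ofFn_get, List.reverse_reverse, hU]
end

section
/- For Hermitian matrices A and B on a finite-dimensional Hilbert space and L > 0, the Trotter error satisfies ‖e^{-i(A+B)L} - (e^{-iAL/N} e^{-iBL/N})^N‖ ≤ (L²/(2N)) ‖[A,B]‖ for all N ∈ ℤ⁺; in particular the error is O(L²/N) as N → ∞. -/
/-!
Exponentials of skew-adjoint elements are unitary, so the `N`-th powers of two such unitaries
differ by at most `N` times their difference, and everything reduces to one step with
`X = -iAL/N`, `Y = -iBL/N`. The path `G s = e^{s(X+Y)} e^{-sY} e^{-sX}` runs from `1` to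
`e^{X+Y} (e^X e^Y)⁻¹` with derivative `e^{s(X+Y)} [X, e^{-sY}] e^{-sX}`; conjugating `X` by
`e^{uY}` moves at speed `‖[X,Y]‖`, so this derivative has norm at most `s ‖[X,Y]‖`, and
integrating over `[0,1]` bounds the one-step error by `‖[X,Y]‖/2 = (L/N)² ‖[A,B]‖/2`.
-/

open NormedSpace Set

section Unitary

variable {E : Type*} [NormedRing E] [StarRing E] [CStarRing E]

theorem norm_pow_sub_pow_le_of_mem_unitary {U V : E} (hU : U ∈ unitary E) (hV : V ∈ unitary E)
    (n : ℕ) : ‖U ^ n - V ^ n‖ ≤ n * ‖U - V‖ := by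
  induction n with
  | zero => simp
  | succ n ih =>
    have hsplit : U ^ (n + 1) - V ^ (n + 1) = U * (U ^ n - V ^ n) + (U - V) * V ^ n := by
      rw [pow_succ' U n, pow_succ' V n, mul_sub, sub_mul, sub_add_sub_cancel]
    calc ‖U ^ (n + 1) - V ^ (n + 1)‖
        ≤ ‖U * (U ^ n - V ^ n)‖ + ‖(U - V) * V ^ n‖ := hsplit ▸ norm_add_le _ _
      _ = ‖U ^ n - V ^ n‖ + ‖U - V‖ := by
        rw [CStarRing.norm_mem_unitary_mul _ hU, CStarRing.norm_mul_mem_unitary _ (pow_mem hV n)]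
      _ ≤ (n + 1 : ℕ) * ‖U - V‖ := by push_cast; linarith

end Unitary

theorem norm_sub_le_of_norm_hasDerivAt_le_mul {F : Type*} [NormedAddCommGroup F]
    [NormedSpace ℝ F] {f f' : ℝ → F} {C t : ℝ} (hf : ∀ s, HasDerivAt f (f' s) s)
    (bound : ∀ s ∈ Ico 0 t, ‖f' s‖ ≤ C * s) (ht : 0 ≤ t) : ‖f t - f 0‖ ≤ C * t ^ 2 / 2 := by
  have hB : ∀ s : ℝ, HasDerivAt (fun s => C * s ^ 2 / 2) (C * s) s := fun s => by
    refine (((hasDerivAt_pow 2 s).const_mul C).div_const 2).congr_deriv ?_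
    push_cast
    ring
  exact image_norm_le_of_norm_deriv_right_le_deriv_boundary (f := fun s => f s - f 0)
    (fun s _ => ((hf s).sub_const _).continuousAt.continuousWithinAt)
    (fun s _ => ((hf s).sub_const _).hasDerivWithinAt) (by simp) hB bound ⟨ht, le_rfl⟩

theorem exp_neg_mul_exp {𝔸 : Type*} [NormedRing 𝔸] [NormedAlgebra ℚ 𝔸] [CompleteSpace 𝔸]
    (x : 𝔸) : exp (-x) * exp x = 1 := by
  rw [← exp_add_of_commute (Commute.refl x).neg_left, neg_add_cancel, exp_zero]

section SkewAdjoint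

variable {E : Type*} [NormedRing E] [StarRing E] [CStarRing E] [NormedAlgebra ℝ E]
  [NormedAlgebra ℚ E] [StarModule ℝ E] [CompleteSpace E]

theorem exp_smul_mem_unitary {X : E} (hX : X ∈ skewAdjoint E) (t : ℝ) :
    exp (t • X) ∈ unitary E :=
  exp_mem_unitary_of_mem_skewAdjoint (skewAdjoint.smul_mem t hX)

theorem norm_commutator_exp_smul_le (X : E) {Y : E} (hY : Y ∈ skewAdjoint E) {t : ℝ}
    (ht : 0 ≤ t) : ‖X * exp (t • Y) - exp (t • Y) * X‖ ≤ t * ‖X * Y - Y * X‖ := by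
  set f : ℝ → E := fun u => exp (u • Y) * X * exp (u • -Y)
  have hf : ∀ u ∈ Icc 0 t,
      HasDerivWithinAt f (exp (u • Y) * (Y * X - X * Y) * exp (u • -Y)) (Icc 0 t) u := by
    intro u _
    refine ((((hasDerivAt_exp_smul_const (𝕂 := ℝ) Y u).mul_const X).mul
      (hasDerivAt_exp_smul_const' (𝕂 := ℝ) (-Y) u)).congr_deriv ?_).hasDerivWithinAt
    noncomm_ring
  have hbound : ∀ u ∈ Ico 0 t, ‖exp (u • Y) * (Y * X - X * Y) * exp (u • -Y)‖ ≤
      ‖X * Y - Y * X‖ := fun u _ => by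
    rw [CStarRing.norm_mul_mem_unitary _ (exp_smul_mem_unitary (neg_mem hY) u),
      CStarRing.norm_mem_unitary_mul _ (exp_smul_mem_unitary hY u), norm_sub_rev]
  have hconj : X * exp (t • Y) - exp (t • Y) * X = (f 0 - f t) * exp (t • Y) := by
    simp only [f, zero_smul, exp_zero, one_mul, mul_one, sub_mul, mul_assoc, smul_neg,
      neg_zero, exp_neg_mul_exp]
  rw [hconj, CStarRing.norm_mul_mem_unitary _ (exp_smul_mem_unitary hY t), norm_sub_rev,
    mul_comm]
  simpa using norm_image_sub_le_of_norm_deriv_le_segment' hf hbound t ⟨ht, le_rfl⟩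

theorem norm_exp_add_sub_exp_mul_exp_le {X Y : E} (hX : X ∈ skewAdjoint E)
    (hY : Y ∈ skewAdjoint E) : ‖exp (X + Y) - exp X * exp Y‖ ≤ ‖X * Y - Y * X‖ / 2 := by
  set G : ℝ → E := fun s => exp (s • (X + Y)) * exp (s • -Y) * exp (s • -X)
  have hG : ∀ s : ℝ, HasDerivAt G (exp (s • (X + Y)) *
      (X * exp (s • -Y) - exp (s • -Y) * X) * exp (s • -X)) s := by
    intro s
    refine (((hasDerivAt_exp_smul_const (𝕂 := ℝ) (X + Y) s).mul
      (hasDerivAt_exp_smul_const' (𝕂 := ℝ) (-Y) s)).mul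
      (hasDerivAt_exp_smul_const' (𝕂 := ℝ) (-X) s)).congr_deriv ?_
    simp only [Pi.mul_apply]
    noncomm_ring
  have hbound : ∀ s ∈ Ico (0 : ℝ) 1, ‖exp (s • (X + Y)) *
      (X * exp (s • -Y) - exp (s • -Y) * X) * exp (s • -X)‖ ≤ ‖X * Y - Y * X‖ * s := by
    intro s hs
    rw [CStarRing.norm_mul_mem_unitary _ (exp_smul_mem_unitary (neg_mem hX) s),
      CStarRing.norm_mem_unitary_mul _ (exp_smul_mem_unitary (add_mem hX hY) s), mul_comm]
    convert norm_commutator_exp_smul_le X (neg_mem hY) hs.1 using 2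
    rw [← norm_neg]; congr 1; noncomm_ring
  have hsplit : exp (X + Y) - exp X * exp Y = (G 1 - G 0) * (exp X * exp Y) := by
    simp only [G, one_smul, zero_smul, exp_zero, mul_one, sub_mul, one_mul]
    rw [mul_assoc _ (exp (-X)), ← mul_assoc (exp (-X)), exp_neg_mul_exp, one_mul, mul_assoc,
      exp_neg_mul_exp, mul_one]
  rw [hsplit, CStarRing.norm_mul_mem_unitary _
    (mul_mem (exp_mem_unitary_of_mem_skewAdjoint hX) (exp_mem_unitary_of_mem_skewAdjoint hY))]
  simpa using norm_sub_le_of_norm_hasDerivAt_le_mul hG hbound zero_le_one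

theorem norm_exp_nsmul_add_sub_pow_le {X Y : E} (hX : X ∈ skewAdjoint E)
    (hY : Y ∈ skewAdjoint E) (n : ℕ) :
    ‖exp (n • (X + Y)) - (exp X * exp Y) ^ n‖ ≤ n * (‖X * Y - Y * X‖ / 2) := by
  rw [exp_nsmul]
  have hV := mul_mem (exp_mem_unitary_of_mem_skewAdjoint hX) (exp_mem_unitary_of_mem_skewAdjoint hY)
  calc _ ≤ n * ‖exp (X + Y) - exp X * exp Y‖ :=
        norm_pow_sub_pow_le_of_mem_unitary (exp_mem_unitary_of_mem_skewAdjoint (add_mem hX hY)) hV n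
    _ ≤ _ := by gcongr; exact norm_exp_add_sub_exp_mul_exp_le hX hY

end SkewAdjoint

open scoped Matrix.Norms.L2Operator

theorem trotter_error_bound_general (d : ℕ) (A B : Matrix (Fin d) (Fin d) ℂ)
    (hA : A.IsHermitian) (hB : B.IsHermitian) (L : ℝ)
    (N : ℕ) (hN : 0 < N) :
    ‖NormedSpace.exp ((-(Complex.I * (L : ℂ))) • (A + B)) -
        (NormedSpace.exp ((-(Complex.I * ((L / N : ℝ) : ℂ))) • A) *
         NormedSpace.exp ((-(Complex.I * ((L / N : ℝ) : ℂ))) • B)) ^ N‖ ≤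
      L ^ 2 / (2 * N) * ‖A * B - B * A‖ := by
  set z : ℂ := -(Complex.I * ((L / N : ℝ) : ℂ))
  have hz : z ∈ skewAdjoint ℂ := by simp [skewAdjoint.mem_iff, z]
  have hN' : (N : ℂ) ≠ 0 := by exact_mod_cast hN.ne'
  have hsum : (-(Complex.I * (L : ℂ))) • (A + B) = N • (z • A + z • B) := by
    rw [← smul_add, ← Nat.cast_smul_eq_nsmul ℂ, smul_smul]
    congr 1
    push_cast [z]
    field_simp
  have hcomm : ‖z • A * z • B - z • B * z • A‖ = (L / N) ^ 2 * ‖A * B - B * A‖ := by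
    have hz_norm : ‖z‖ = |L| / N := by simp [z]
    rw [smul_mul_smul_comm, smul_mul_smul_comm, ← smul_sub, norm_smul, norm_mul, hz_norm, ← sq,
      div_pow, div_pow, sq_abs]
  -- the L2 operator norm instances provide no `ℚ`-algebra structure, which the `exp` API needs
  let : NormedAlgebra ℚ (Matrix (Fin d) (Fin d) ℂ) := .restrictScalars ℚ ℝ _
  rw [hsum]
  calc _ ≤ N * (‖z • A * z • B - z • B * z • A‖ / 2) :=
        norm_exp_nsmul_add_sub_pow_le (IsSelfAdjoint.smul_mem_skewAdjoint hz hA)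
          (IsSelfAdjoint.smul_mem_skewAdjoint hz hB) N
    _ = _ := by
      rw [hcomm]
      field_simp

/-- **Trotter error bound.**
For Hermitian `A, B` and `L > 0`, for every positive `N`,
`‖e^{-i(A+B)L} - (e^{-iAL/N} e^{-iBL/N})^N‖ ≤ (L²/(2N)) ‖[A,B]‖`. -/
theorem trotter_error_bound (d : ℕ) (A B : Matrix (Fin d) (Fin d) ℂ)
    (hA : A.IsHermitian) (hB : B.IsHermitian) (L : ℝ) (hL : 0 < L)
    (N : ℕ) (hN : 0 < N) :
    ‖NormedSpace.exp ((-(Complex.I * (L : ℂ))) • (A + B)) -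
        (NormedSpace.exp ((-(Complex.I * ((L / N : ℝ) : ℂ))) • A) *
         NormedSpace.exp ((-(Complex.I * ((L / N : ℝ) : ℂ))) • B)) ^ N‖ ≤
      L ^ 2 / (2 * N) * ‖A * B - B * A‖ :=
  trotter_error_bound_general d A B hA hB L N hN
end

section
/- The Lie algebra generated (under commutators and real linear combinations) by the set of d×d Hermitian matrices of the form Σ_m β_m |m⟩⟨m| + Σ_m C_m(|m⟩⟨m+1| + |m+1⟩⟨m|) with arbitrary real β_m, C_m, multiplied by i, is the full unitary Lie algebra u(d). -/
/-!
Among the generators are `i E_mm` and `i (E_{m,m+1} + E_{m+1,m})`. Bracketing `i E_jj` with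
`i (E_jk + E_kj)` gives `E_jk - E_kj` up to sign, and
`[E_jl - E_lj, i (E_lk + E_kl)] = i (E_jk + E_kj)` for distinct `j, l, k`; walking along the chain `0, 1, …, d - 1` therefore produces the real basis
`i E_jj`, `E_jk - E_kj`, `i (E_jk + E_kj)` of `u(d)`. Conversely, skew-Hermitian matrices are closed
under commutators, and `i H` is skew-Hermitian for every Hermitian `H`.
-/

open Matrix

attribute [local instance 100] LieRing.ofAssociativeRing

/-- The tridiagonal Hermitian matrix with real diagonal `β` and real couplings `C`. -/
def triHam (d : ℕ) (β C : Fin d → ℝ) : Matrix (Fin d) (Fin d) ℂ :=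
  fun i j =>
    if i = j then (β i : ℂ)
    else if (i : ℕ) + 1 = (j : ℕ) then (C i : ℂ)
    else if (j : ℕ) + 1 = (i : ℕ) then (C j : ℂ)
    else 0

def skewAdjoint.lieSubalgebra (R A : Type*) [CommRing R] [StarRing R] [TrivialStar R] [Ring A]
    [StarRing A] [Algebra R A] [StarModule R A] : LieSubalgebra R A :=
  { skewAdjoint.submodule R A with
    lie_mem' := fun {x y} (hx : star x = -x) (hy : star y = -y) =>
      show star ⁅x, y⁆ = -⁅x, y⁆ by
      rw [Ring.lie_def, star_sub, star_mul, star_mul, hx, hy, neg_mul_neg, neg_mul_neg, neg_sub] }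

lemma skewAdjoint.mem_lieSubalgebra_iff {R A : Type*} [CommRing R] [StarRing R] [TrivialStar R]
    [Ring A] [StarRing A] [Algebra R A] [StarModule R A] {x : A} :
    x ∈ skewAdjoint.lieSubalgebra R A ↔ star x = -x :=
  skewAdjoint.mem_iff

namespace Matrix

open Complex

variable {n : Type*} [DecidableEq n]

noncomputable def iSymmUnit (j k : n) : Matrix n n ℂ := I • (single j k 1 + single k j 1)

noncomputable def antisymmUnit (j k : n) : Matrix n n ℂ := single j k 1 - single k j 1

lemma iSymmUnit_comm (j k : n) : iSymmUnit j k = iSymmUnit k j := by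
  rw [iSymmUnit, iSymmUnit, add_comm]

lemma iSymmUnit_self (j : n) : iSymmUnit j j = (2 : ℝ) • (I • single j j 1) := by
  rw [iSymmUnit, ← two_smul ℝ, smul_comm]

lemma single_sub_single_star (j k : n) (z : ℂ) :
    single j k z - single k j (star z) = z.re • antisymmUnit j k + z.im • iSymmUnit j k := by
  ext p q
  simp only [antisymmUnit, iSymmUnit, sub_apply, add_apply, smul_apply, single_apply]
  apply Complex.ext <;> split_ifs <;> simp
  ring

variable [Fintype n]

lemma lie_I_single_self_iSymmUnit {j k : n} (h : j ≠ k) :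
    ⁅I • single j j (1 : ℂ), iSymmUnit j k⁆ = -antisymmUnit j k := by
  rw [Ring.lie_def, iSymmUnit, antisymmUnit]
  simp only [smul_mul_smul, mul_add, add_mul, single_mul_single_same, one_mul,
    single_mul_single_of_ne (1 : ℂ) _ _ _ h, single_mul_single_of_ne (1 : ℂ) _ _ _ h.symm]
  match_scalars <;> simp

lemma lie_antisymmUnit_iSymmUnit {j l k : n} (hjl : j ≠ l) (hjk : j ≠ k) (hlk : l ≠ k) :
    ⁅antisymmUnit j l, iSymmUnit l k⁆ = iSymmUnit j k := by
  rw [Ring.lie_def, iSymmUnit, iSymmUnit, antisymmUnit]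
  simp only [mul_smul_comm, smul_mul_assoc, sub_mul, mul_sub, mul_add, add_mul,
    single_mul_single_same, one_mul, single_mul_single_of_ne (1 : ℂ) _ _ _ hjl,
    single_mul_single_of_ne (1 : ℂ) _ _ _ hjl.symm, single_mul_single_of_ne (1 : ℂ) _ _ _ hjk,
    single_mul_single_of_ne (1 : ℂ) _ _ _ hjk.symm, single_mul_single_of_ne (1 : ℂ) _ _ _ hlk,
    single_mul_single_of_ne (1 : ℂ) _ _ _ hlk.symm]
  match_scalars <;> simp

section Generation

variable (L : LieSubalgebra ℝ (Matrix n n ℂ))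

lemma antisymmUnit_mem_of_iSymmUnit_mem {j k : n} (hj : I • single j j (1 : ℂ) ∈ L)
    (h : j ≠ k) (hS : iSymmUnit j k ∈ L) : antisymmUnit j k ∈ L := by
  have h' := L.lie_mem hj hS
  rw [lie_I_single_self_iSymmUnit h] at h'
  simpa using L.neg_mem h'

lemma sub_conjTranspose_mem (hA : ∀ j k, antisymmUnit j k ∈ L)
    (hS : ∀ j k, iSymmUnit j k ∈ L) (M : Matrix n n ℂ) : M - Mᴴ ∈ L := by
  rw [matrix_eq_sum_single M]
  simp only [conjTranspose_sum, conjTranspose_single, ← Finset.sum_sub_distrib,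
    single_sub_single_star]
  exact L.toSubmodule.sum_mem fun j _ => L.toSubmodule.sum_mem fun k _ =>
    L.add_mem (L.smul_mem _ (hA j k)) (L.smul_mem _ (hS j k))

lemma mem_of_conjTranspose_eq_neg (hA : ∀ j k, antisymmUnit j k ∈ L)
    (hS : ∀ j k, iSymmUnit j k ∈ L) {M : Matrix n n ℂ} (hM : Mᴴ = -M) : M ∈ L := by
  have h := L.smul_mem (1 / 2 : ℝ) (sub_conjTranspose_mem L hA hS M)
  rwa [hM, sub_neg_eq_add, ← two_smul ℝ, smul_smul, one_div, inv_mul_cancel₀ two_ne_zero,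
    one_smul] at h

end Generation

section Chain

variable {d : ℕ} (L : LieSubalgebra ℝ (Matrix (Fin d) (Fin d) ℂ))

lemma iSymmUnit_mem_of_lt (hdiag : ∀ m, I • single m m (1 : ℂ) ∈ L)
    (hadj : ∀ j k : Fin d, (j : ℕ) + 1 = k → iSymmUnit j k ∈ L) {j k : Fin d}
    (hjk : j < k) : iSymmUnit j k ∈ L := by
  suffices ∀ n (k : Fin d), (k : ℕ) = j + 1 + n → iSymmUnit j k ∈ L from
    this (k - j - 1) k (by rw [Fin.lt_def] at hjk; omega)
  intro n
  induction n with
  | zero => exact fun k hk => hadj j k hk.symm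
  | succ n ih =>
    intro k hk
    let l : Fin d := ⟨j + 1 + n, by omega⟩
    have hl : (l : ℕ) = j + 1 + n := rfl
    have hjl : j ≠ l := Fin.ne_of_val_ne (by omega)
    rw [← lie_antisymmUnit_iSymmUnit hjl (Fin.ne_of_val_ne (by omega))
      (Fin.ne_of_val_ne (by omega))]
    exact L.lie_mem (antisymmUnit_mem_of_iSymmUnit_mem L (hdiag j) hjl (ih l hl))
      (hadj l k (by omega))

lemma iSymmUnit_mem (hdiag : ∀ m, I • single m m (1 : ℂ) ∈ L)
    (hadj : ∀ j k : Fin d, (j : ℕ) + 1 = k → iSymmUnit j k ∈ L) (j k : Fin d) :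
    iSymmUnit j k ∈ L := by
  rcases lt_trichotomy j k with h | rfl | h
  · exact iSymmUnit_mem_of_lt L hdiag hadj h
  · rw [iSymmUnit_self]
    exact L.smul_mem _ (hdiag j)
  · rw [iSymmUnit_comm]
    exact iSymmUnit_mem_of_lt L hdiag hadj h

lemma antisymmUnit_mem (hdiag : ∀ m, I • single m m (1 : ℂ) ∈ L)
    (hadj : ∀ j k : Fin d, (j : ℕ) + 1 = k → iSymmUnit j k ∈ L) (j k : Fin d) :
    antisymmUnit j k ∈ L := by
  rcases eq_or_ne j k with rfl | h
  · rw [antisymmUnit, sub_self]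
    exact L.zero_mem
  · exact antisymmUnit_mem_of_iSymmUnit_mem L (hdiag j) h (iSymmUnit_mem L hdiag hadj j k)

theorem mem_of_conjTranspose_eq_neg_of_chain (hdiag : ∀ m, I • single m m (1 : ℂ) ∈ L)
    (hadj : ∀ j k : Fin d, (j : ℕ) + 1 = k → iSymmUnit j k ∈ L)
    {M : Matrix (Fin d) (Fin d) ℂ} (hM : Mᴴ = -M) : M ∈ L :=
  mem_of_conjTranspose_eq_neg L (antisymmUnit_mem L hdiag hadj) (iSymmUnit_mem L hdiag hadj) hM

end Chain

end Matrix

variable {d : ℕ}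

lemma conjTranspose_triHam (β C : Fin d → ℝ) : (triHam d β C)ᴴ = triHam d β C := by
  ext i j
  simp only [conjTranspose_apply, triHam]
  split_ifs <;> first | omega | (subst_vars; simp)

lemma triHam_single_zero (m : Fin d) : triHam d (Pi.single m 1) 0 = single m m 1 := by
  ext i j
  by_cases hij : i = j
  · subst hij
    by_cases him : m = i <;> simp [triHam, him]
  · simp [triHam, single_apply, hij]
    omega

lemma triHam_zero_single {j k : Fin d} (h : (j : ℕ) + 1 = k) :
    triHam d 0 (Pi.single j 1) = single j k 1 + single k j 1 := by
  ext p q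
  simp only [triHam, Matrix.add_apply, single_apply, Pi.single_apply, Pi.zero_apply, Fin.ext_iff]
  split_ifs <;> first | omega | simp

theorem tridiagonal_generates_u_d_general (d : ℕ) :
    (LieSubalgebra.lieSpan ℝ (Matrix (Fin d) (Fin d) ℂ)
        {A | ∃ β C : Fin d → ℝ, A = Complex.I • triHam d β C} : Set (Matrix (Fin d) (Fin d) ℂ)) =
      {A : Matrix (Fin d) (Fin d) ℂ | Aᴴ = -A} := by
  set L := LieSubalgebra.lieSpan ℝ (Matrix (Fin d) (Fin d) ℂ)
    {A | ∃ β C : Fin d → ℝ, A = Complex.I • triHam d β C}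
  have hgen (β C : Fin d → ℝ) : Complex.I • triHam d β C ∈ L :=
    LieSubalgebra.subset_lieSpan ⟨β, C, rfl⟩
  refine Set.Subset.antisymm ?_ fun M hM => ?_
  · have hL : L ≤ skewAdjoint.lieSubalgebra ℝ _ := LieSubalgebra.lieSpan_le.mpr <| by
      rintro _ ⟨β, C, rfl⟩
      rw [SetLike.mem_coe, skewAdjoint.mem_lieSubalgebra_iff, star_smul, star_eq_conjTranspose,
        conjTranspose_triHam, Complex.star_def, Complex.conj_I, neg_smul]
    intro A hA
    simpa [skewAdjoint.mem_lieSubalgebra_iff, star_eq_conjTranspose] using hL hA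
  · refine mem_of_conjTranspose_eq_neg_of_chain L (fun m => ?_) (fun j k h => ?_) hM
    · simpa [triHam_single_zero] using hgen (Pi.single m 1) 0
    · simpa [iSymmUnit, triHam_zero_single h] using hgen 0 (Pi.single j 1)

/-- **Controllability: the tridiagonal Hamiltonians generate u(d).**
The real Lie algebra generated by the matrices `i H` with `H` tridiagonal Hermitian
(arbitrary real diagonal and couplings) is the full Lie algebra `u(d)` of
skew-Hermitian matrices. -/
theorem tridiagonal_generates_u_d (d : ℕ) (hd : 2 ≤ d) :
    (LieSubalgebra.lieSpan ℝ (Matrix (Fin d) (Fin d) ℂ)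
        {A | ∃ β C : Fin d → ℝ, A = Complex.I • triHam d β C} : Set (Matrix (Fin d) (Fin d) ℂ)) =
      {A : Matrix (Fin d) (Fin d) ℂ | Aᴴ = -A} :=
  tridiagonal_generates_u_d_general d
end

section
/- For a 2×2 Hermitian H = ηI + ασ_z + κσ_x with Ω = √(α²+κ²) ≠ 0, the unitary e^{-iHL} equals the target U = e^{iη'}[[r e^{iφ}, √(1-r²)e^{iδ}],[-√(1-r²)e^{-iδ}, re^{-iφ}]] with δ = -π/2 convention if and only if (up to the stated phase conditions): cos(ΩL) and the ratios α/Ω, κ/Ω satisfy r e^{iφ'} = cos(ΩL) - i(α/Ω) sin(ΩL) and √(1-r²) = (κ/Ω)|sin(ΩL)|. In particular, choosing κ₄ = √(1-r²) θ/(L sin θ), α₄ = r sin(ζ) κ₄/√(1-r²), with θ = arccos(r cos ζ), one has Ω L = θ and the matrix e^{-iH₄L} has off-diagonal modulus √(1-r²). -/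
open Matrix Complex

/-! With `H = α σ_z + κ σ_x` one has `H² = Ω² · 1`, `Ω = √(α² + κ²)`, so the exponential series of
`-i L H` splits into the cosine and sine series: `exp(-i L H) = cos(Ω L) · 1 - i (sin(Ω L) / Ω) H`,
whose off-diagonal entry has modulus `|κ| |sin(Ω L)| / Ω`. The fourth-section parameters are
`(α₄, κ₄) = θ / (L sin θ) · (r sin ζ, √(1 - r²))`, and `(r sin ζ)² + (1 - r²) = 1 - (r cos ζ)² = sin² θ`;
hence `Ω L = θ`, and the modulus is `κ₄ sin θ · L / θ = √(1 - r²)`. -/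

section ExpOfSquareScalar

variable {𝔸 : Type*} [NormedRing 𝔸] [NormedAlgebra ℂ 𝔸] [CompleteSpace 𝔸]

theorem NormedSpace.exp_eq_cos_smul_one_add_sin_div_smul {A : 𝔸} {z : ℂ} (hz : z ≠ 0)
    (hA : A ^ 2 = -(z ^ 2) • (1 : 𝔸)) :
    NormedSpace.exp A = Complex.cos z • (1 : 𝔸) + (Complex.sin z / z) • A := by
  have hpow : ∀ k : ℕ, A ^ (2 * k) = (-(z ^ 2)) ^ k • (1 : 𝔸) := fun k => by
    rw [pow_mul, hA, smul_pow, one_pow]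
  have hcos : HasSum (fun k : ℕ => (((2 * k).factorial : ℂ))⁻¹ • A ^ (2 * k))
      (Complex.cos z • (1 : 𝔸)) := by
    convert (Complex.hasSum_cos z).smul_const (1 : 𝔸) using 2 with k
    rw [hpow, smul_smul, neg_pow, pow_mul]
    ring_nf
  have hsin : HasSum (fun k : ℕ => (((2 * k + 1).factorial : ℂ))⁻¹ • A ^ (2 * k + 1))
      ((Complex.sin z / z) • A) := by
    convert ((Complex.hasSum_sin z).div_const z).smul_const A using 2 with k
    rw [pow_succ, hpow, smul_mul_assoc, one_mul, smul_smul, neg_pow, pow_add, pow_mul]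
    field_simp
  exact (NormedSpace.exp_series_hasSum_exp' A).unique (hcos.even_add_odd hsin)

end ExpOfSquareScalar

theorem Matrix.exp_eq_cos_smul_one_add_sin_div_smul {n : Type*} [Fintype n] [DecidableEq n]
    {A : Matrix n n ℂ} {z : ℂ} (hz : z ≠ 0) (hA : A ^ 2 = -(z ^ 2) • (1 : Matrix n n ℂ)) :
    NormedSpace.exp A = Complex.cos z • (1 : Matrix n n ℂ) + (Complex.sin z / z) • A := by
  -- `exp` only depends on the topology, so any compatible normed algebra structure will do.
  let _ : NormedRing (Matrix n n ℂ) := Matrix.linftyOpNormedRing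
  let _ : NormedAlgebra ℂ (Matrix n n ℂ) := Matrix.linftyOpNormedAlgebra
  exact NormedSpace.exp_eq_cos_smul_one_add_sin_div_smul hz hA

theorem pauli_combination_sq (α κ : ℂ) :
    (α • !![1, 0; 0, -1] + κ • !![0, 1; 1, 0] : Matrix (Fin 2) (Fin 2) ℂ) ^ 2 =
      (α ^ 2 + κ ^ 2) • (1 : Matrix (Fin 2) (Fin 2) ℂ) := by
  ext i j
  fin_cases i <;> fin_cases j <;> simp [sq, Matrix.mul_apply, Fin.sum_univ_two] <;> ring

theorem norm_exp_pauli_apply_zero_one {α κ t : ℝ} (h : √(α ^ 2 + κ ^ 2) * t ≠ 0) :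
    ‖(NormedSpace.exp ((-(Complex.I * (t : ℂ))) •
        ((α : ℂ) • !![1, 0; 0, -1] + (κ : ℂ) • !![0, 1; 1, 0])) :
        Matrix (Fin 2) (Fin 2) ℂ) 0 1‖ =
      |κ| * |Real.sin (√(α ^ 2 + κ ^ 2) * t)| / √(α ^ 2 + κ ^ 2) := by
  set Ω := √(α ^ 2 + κ ^ 2)
  have ht0 : t ≠ 0 := right_ne_zero_of_mul h
  have hΩsq : (Ω : ℂ) ^ 2 = (α : ℂ) ^ 2 + (κ : ℂ) ^ 2 := by
    exact_mod_cast Real.sq_sqrt (by positivity : 0 ≤ α ^ 2 + κ ^ 2)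
  have hsq : ((-(Complex.I * (t : ℂ))) •
      ((α : ℂ) • !![1, 0; 0, -1] + (κ : ℂ) • !![0, 1; 1, 0])) ^ 2 =
        -(((Ω * t : ℝ) : ℂ) ^ 2) • (1 : Matrix (Fin 2) (Fin 2) ℂ) := by
    rw [smul_pow, pauli_combination_sq, smul_smul, ← hΩsq]
    congr 1
    push_cast
    linear_combination (t : ℂ) ^ 2 * (Ω : ℂ) ^ 2 * Complex.I_sq
  rw [Matrix.exp_eq_cos_smul_one_add_sin_div_smul (by exact_mod_cast h) hsq,
    ← Complex.ofReal_sin]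
  have hΩnn : 0 ≤ Ω := Real.sqrt_nonneg _
  simp [-Complex.ofReal_sin, abs_of_nonneg hΩnn, field]

theorem sqrt_sq_add_sq_mul_eq_of_sq_add_sq {a s c θ L : ℝ} (hs : s ≠ 0) (hc : c ≠ 0)
    (hθ : 0 ≤ θ) (hL : 0 < L) (h : a ^ 2 + s ^ 2 = c ^ 2) :
    √((a * (s * θ / (L * c)) / s) ^ 2 + (s * θ / (L * c)) ^ 2) * L = θ := by
  have hsq : (a * (s * θ / (L * c)) / s) ^ 2 + (s * θ / (L * c)) ^ 2 = (θ / L) ^ 2 := by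
    field_simp
    linear_combination θ ^ 2 * h
  rw [hsq, Real.sqrt_sq (by positivity)]
  field_simp

theorem sin_arccos_mul_cos_sq {r : ℝ} (hr : r ^ 2 ≤ 1) (ζ : ℝ) :
    Real.sin (Real.arccos (r * Real.cos ζ)) ^ 2 = (r * Real.sin ζ) ^ 2 + √(1 - r ^ 2) ^ 2 := by
  have hcos : (r * Real.cos ζ) ^ 2 ≤ 1 := by
    nlinarith [Real.cos_sq_le_one ζ, sq_nonneg r]
  rw [Real.sin_arccos, Real.sq_sqrt (by linarith), Real.sq_sqrt (by linarith)]
  linear_combination -r ^ 2 * Real.sin_sq_add_cos_sq ζ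

/-- **Parameters of the fourth section.**
For `r ∈ (0,1)`, `ζ ∈ ℝ`, `L > 0`, with `θ = arccos(r cos ζ)`,
`κ₄ = √(1-r²) θ / (L sin θ)` and `α₄ = r sin(ζ) κ₄ / √(1-r²)`, one has
`√(α₄² + κ₄²) · L = θ`, and the `(1,2)` entry of `exp(-i(α₄σ_z + κ₄σ_x)L)` has
modulus `√(1-r²)`. -/
theorem fourth_section_parameters (r ζ L : ℝ) (hr : r ∈ Set.Ioo (0 : ℝ) 1) (hL : 0 < L)
    (θ κ₄ α₄ : ℝ)
    (hθ : θ = Real.arccos (r * Real.cos ζ))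
    (hκ : κ₄ = Real.sqrt (1 - r ^ 2) * θ / (L * Real.sin θ))
    (hα : α₄ = r * Real.sin ζ * κ₄ / Real.sqrt (1 - r ^ 2))
    (σx σz : Matrix (Fin 2) (Fin 2) ℂ)
    (hσx : σx = !![0, 1; 1, 0]) (hσz : σz = !![1, 0; 0, -1]) :
    Real.sqrt (α₄ ^ 2 + κ₄ ^ 2) * L = θ ∧
    ‖((NormedSpace.exp
            ((-(Complex.I * (L : ℂ))) • ((α₄ : ℂ) • σz + (κ₄ : ℂ) • σx))) 0 1)‖ =
      Real.sqrt (1 - r ^ 2) := by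
  obtain ⟨hr0, hr1⟩ := hr
  have hr2 : r ^ 2 < 1 := by nlinarith
  have hs : 0 < √(1 - r ^ 2) := Real.sqrt_pos.2 (by linarith)
  have hx : (r * Real.cos ζ) ^ 2 < 1 := by
    nlinarith [Real.cos_sq_le_one ζ, sq_nonneg r]
  have hθpos : 0 < θ := hθ ▸ Real.arccos_pos.2 (abs_lt.1 ((sq_lt_one_iff_abs_lt_one _).1 hx)).2
  have hsin_sq : Real.sin θ ^ 2 = (r * Real.sin ζ) ^ 2 + √(1 - r ^ 2) ^ 2 :=
    hθ ▸ sin_arccos_mul_cos_sq hr2.le ζ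
  have hsin : 0 < Real.sin θ := by
    rw [hθ, Real.sin_arccos]; exact Real.sqrt_pos.2 (by linarith)
  have hΩL : √(α₄ ^ 2 + κ₄ ^ 2) * L = θ := by
    subst hα hκ
    exact sqrt_sq_add_sq_mul_eq_of_sq_add_sq hs.ne' hsin.ne' hθpos.le hL hsin_sq.symm
  refine ⟨hΩL, ?_⟩
  subst hσx hσz
  have hΩ : √(α₄ ^ 2 + κ₄ ^ 2) = θ / L := by rw [← hΩL]; field_simp
  have hκpos : 0 < κ₄ := hκ ▸ by positivity
  rw [norm_exp_pauli_apply_zero_one (hΩL ▸ hθpos.ne'), hΩL, hΩ, abs_of_pos hsin,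
    abs_of_pos hκpos, hκ]
  field_simp
end
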